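/- Assume conditions (M), (O), (R), (P) and (D). Let η ∈ Cm, U := η/∼, and let α₁, …, αₙ ∈ C with α₁ ⊓ ⋯ ⊓ αₙ ≤ η. Then there exist μ₁, …, μₙ ∈ U ∪ {⊤} such that αᵢ ≤ μᵢ for i = 1, …, n, μ₁ ⊓ ⋯ ⊓ μₙ ≤ η, and η = μ_{i₁} • ⋯ • μ_{i_k} for some 1 ≤ i₁ < … < i_k ≤ n; in other words, η belongs to the subgroup of the Boolean group (Ū, •) generated by {μ₁, …, μₙ} \ {⊤}. (This is Proposition 15 of Section 3 of the paper, strengthening the decomposition theorem.) -/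

import Mathlib

variable {A : Type*}

/-- `η` is a completely meet irreducible member of `C`, with (unique) cover `p` in `C`. -/
def IsCMI (C : Set (Setoid A)) (η p : Setoid A) : Prop :=
  η ∈ C ∧ p ∈ C ∧ η < p ∧ ∀ β ∈ C, η < β → p ≤ β

/-- A single up or down transposition between the intervals `I[pq.1, pq.2]`
and `I[rs.1, rs.2]` of `C`. -/
def Persp (C : Set (Setoid A)) (pq rs : Setoid A × Setoid A) : Prop :=
  pq.1 ∈ C ∧ pq.2 ∈ C ∧ rs.1 ∈ C ∧ rs.2 ∈ C ∧
    ((pq.1 = pq.2 ⊓ rs.1 ∧ rs.2 = pq.2 ⊔ rs.1) ∨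
      (rs.1 = rs.2 ⊓ pq.1 ∧ pq.2 = rs.2 ⊔ pq.1))

/-- Projectivity of intervals of `C`: a finite chain of up and down transpositions. -/
def Projective (C : Set (Setoid A)) : Setoid A × Setoid A → Setoid A × Setoid A → Prop :=
  Relation.ReflTransGen (Persp C)

/-- Prime interval projectivity `φ ∼ ψ`: the prime intervals `I[φ,φ⁺]` and `I[ψ,ψ⁺]`
over completely meet irreducible members of `C` are projective. -/
def PIP (C : Set (Setoid A)) (φ ψ : Setoid A) : Prop :=
  ∃ p q, IsCMI C φ p ∧ IsCMI C ψ q ∧ Projective C (φ, p) (ψ, q)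

/-- `Θ(a,b)`: the least member of `C` containing the pair `(a, b)`. -/
def theta (C : Set (Setoid A)) (a b : A) : Setoid A :=
  sInf {s | s ∈ C ∧ s.r a b}

/-- The relation `φ • ψ`: the pairs of `p = φ⁺ = ψ⁺` on which `φ` and `ψ` agree
(the complement of the symmetric difference of `φ` and `ψ` intersected with `p`). -/
def Bul (p φ ψ : Setoid A) (x y : A) : Prop :=
  p.r x y ∧ (φ.r x y ↔ ψ.r x y)

/-- Iterated `•` product (with unit the cover relation `p`) of a list of relations. -/
def BulList (p : A → A → Prop) : List (A → A → Prop) → A → A → Prop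
  | [] => p
  | r :: l => fun x y => p x y ∧ (r x y ↔ BulList p l x y)

/-!
Induct on `n`, splitting `α₁ ⊓ (α₂ ⊓ ⋯ ⊓ αₙ) ≤ η` by (D) into `μ₁ ⊓ ν ≤ η`. The essential case is
that `μ₁`, `ν`, `η` are three distinct members of `η/∼`, which by (P) share the cover `p`; then
`η = μ₁ • ν`, and the induction continues with `ν` in place of `η`.

Condition (O) makes every completely meet irreducible `γ` of index at most two in its cover, so on
`p` the relation "`η` iff (`μ₁` iff `ν`)" is an equivalence. Modularity shows that any two of
`η`, `μ₁`, `ν` meet below the third, so this equivalence contains `μ₁` and `η`, hence their join `p`.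
-/

section Conditions

variable (one : A) (C : Set (Setoid A))

-- Conditions (M), (O), (P) and (D), in this order.

def IsModularOn : Prop :=
  ∀ x ∈ C, ∀ y ∈ C, ∀ z ∈ C, x ≤ z → x ⊔ y ⊓ z = (x ⊔ y) ⊓ z

def JoinThetaInjective : Prop :=
  ∀ α ∈ C, ∀ a b : A, α ⊔ theta C one a = α ⊔ theta C one b ↔ α.r a b

def PIPSameCover : Prop :=
  ∀ φ ψ p q : Setoid A, IsCMI C φ p → IsCMI C ψ q → Projective C (φ, p) (ψ, q) → p = q

def PIPDecomposable : Prop :=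
  ∀ α ∈ C, ∀ β ∈ C, ∀ η p, IsCMI C η p → α ⊓ β ≤ η →
    ∃ μ₁ μ₂ : Setoid A, (μ₁ = ⊤ ∨ PIP C μ₁ η) ∧ (μ₂ = ⊤ ∨ PIP C μ₂ η) ∧
      α ≤ μ₁ ∧ β ≤ μ₂ ∧ μ₁ ⊓ μ₂ ≤ η

end Conditions

section Closure

variable {C : Set (Setoid A)}

lemma theta_mem (hInf : ∀ S ⊆ C, sInf S ∈ C) (a b : A) : theta C a b ∈ C :=
  hInf _ fun _ hs => hs.1

lemma rel_theta (C : Set (Setoid A)) (a b : A) : (theta C a b).r a b :=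
  fun _ hs => hs.2

lemma theta_le {δ : Setoid A} (hδ : δ ∈ C) {a b : A} (h : δ.r a b) : theta C a b ≤ δ :=
  sInf_le ⟨hδ, h⟩

lemma sup_mem_of_sSup_mem (hSup : ∀ S ⊆ C, sSup S ∈ C) {x y : Setoid A} (hx : x ∈ C)
    (hy : y ∈ C) : x ⊔ y ∈ C := by
  simpa only [sSup_pair] using hSup {x, y} (Set.pair_subset hx hy)

lemma inf_mem_of_sInf_mem (hInf : ∀ S ⊆ C, sInf S ∈ C) {x y : Setoid A} (hx : x ∈ C)
    (hy : y ∈ C) : x ⊓ y ∈ C := by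
  simpa only [sInf_pair] using hInf {x, y} (Set.pair_subset hx hy)

lemma iInf_mem_of_sInf_mem (hInf : ∀ S ⊆ C, sInf S ∈ C) {ι : Sort*} {f : ι → Setoid A}
    (hf : ∀ i, f i ∈ C) : ⨅ i, f i ∈ C :=
  hInf _ (Set.range_subset_iff.mpr hf)

end Closure

namespace IsCMI

variable {C : Set (Setoid A)} {γ η p : Setoid A}

lemma mem (h : IsCMI C γ p) : γ ∈ C := h.1

lemma cover_mem (h : IsCMI C γ p) : p ∈ C := h.2.1

lemma lt_cover (h : IsCMI C γ p) : γ < p := h.2.2.1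

lemma le_cover (h : IsCMI C γ p) : γ ≤ p := h.lt_cover.le

lemma ne_top (h : IsCMI C γ p) : γ ≠ ⊤ := fun hγ => h.lt_cover.not_ge (hγ ▸ le_top)

lemma cover_le (h : IsCMI C γ p) {β : Setoid A} (hβ : β ∈ C) (hlt : γ < β) : p ≤ β :=
  h.2.2.2 β hβ hlt

lemma cover_eq {q : Setoid A} (h : IsCMI C γ p) (h' : IsCMI C γ q) : p = q :=
  le_antisymm (h.cover_le h'.cover_mem h'.lt_cover) (h'.cover_le h.cover_mem h.lt_cover)

lemma eq_of_le_of_lt_cover (h : IsCMI C γ p) (hη : η ∈ C) (hle : γ ≤ η) (hlt : η < p) :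
    γ = η :=
  hle.eq_of_not_lt fun hγη => (h.cover_le hη hγη).not_gt hlt

end IsCMI

namespace PIP

variable {C : Set (Setoid A)} {φ ψ χ p : Setoid A}

lemma refl (h : IsCMI C φ p) : PIP C φ φ := ⟨p, p, h, h, .refl⟩

lemma trans (h₁ : PIP C φ ψ) (h₂ : PIP C ψ χ) : PIP C φ χ := by
  obtain ⟨p, q, hφ, hψ, hφψ⟩ := h₁
  obtain ⟨q', r, hψ', hχ, hψχ⟩ := h₂
  obtain rfl := hψ.cover_eq hψ'
  exact ⟨p, r, hφ, hχ, hφψ.trans hψχ⟩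

lemma ne_top (h : PIP C φ ψ) : φ ≠ ⊤ :=
  let ⟨_, _, hφ, _⟩ := h
  hφ.ne_top

lemma isCMI (hP : PIPSameCover C) (h : PIP C φ ψ) (hψ : IsCMI C ψ p) : IsCMI C φ p := by
  obtain ⟨q, r, hφ, hψ', hφψ⟩ := h
  rwa [hP φ ψ q r hφ hψ' hφψ, hψ'.cover_eq hψ] at hφ

end PIP

lemma eq_of_le_of_eq_top_or_pip {C : Set (Setoid A)} (hP : PIPSameCover C) {μ η p : Setoid A}
    (hη : IsCMI C η p) (hμ : μ = ⊤ ∨ PIP C μ η) (hle : μ ≤ η) : μ = η := by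
  rcases hμ with rfl | hμ
  · exact absurd (top_le_iff.mp hle) hη.ne_top
  · exact (hμ.isCMI hP hη).eq_of_le_of_lt_cover hη.mem hle hη.lt_cover

def HasParityOn (p γ : Setoid A) : Prop :=
  ∀ ⦃u v w : A⦄, p.r u v → p.r v w → (γ.r u w ↔ (γ.r u v ↔ γ.r v w))

namespace IsCMI

variable {one : A} {C : Set (Setoid A)} {γ p : Setoid A}

lemma sup_theta_sup_theta_eq (hInf : ∀ S ⊆ C, sInf S ∈ C) (hSup : ∀ S ⊆ C, sSup S ∈ C)
    (hγ : IsCMI C γ p) {a b : A} (hab : p.r a b) (hnab : ¬ γ.r a b) :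
    γ ⊔ theta C one a ⊔ theta C one b = p ⊔ theta C one a := by
  have hpa : p ⊔ theta C one a ∈ C := sup_mem_of_sSup_mem hSup hγ.cover_mem (theta_mem hInf one a)
  refine le_antisymm (sup_le (sup_le_sup_right hγ.le_cover _) (theta_le hpa ?_)) ?_
  · exact (p ⊔ theta C one a).trans' (le_sup_right (a := p) (rel_theta C one a))
      (le_sup_left (b := theta C one a) hab)
  have hθab : theta C a b ≤ theta C one a ⊔ theta C one b := by
    refine theta_le (sup_mem_of_sSup_mem hSup (theta_mem hInf one a) (theta_mem hInf one b)) ?_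
    exact Setoid.trans' _ (Setoid.symm' _ (le_sup_left (b := theta C one b) (rel_theta C one a)))
      (le_sup_right (a := theta C one a) (rel_theta C one b))
  have hp : p ≤ γ ⊔ theta C a b := by
    refine hγ.cover_le (sup_mem_of_sSup_mem hSup hγ.mem (theta_mem hInf a b)) ?_
    exact left_lt_sup.mpr fun h => hnab (h (rel_theta C a b))
  calc p ⊔ theta C one a ≤ γ ⊔ theta C a b ⊔ theta C one a := sup_le_sup_right hp _
    _ ≤ γ ⊔ theta C one a ⊔ theta C one b := by
      rw [sup_assoc, sup_assoc]
      exact sup_le_sup_left (sup_le hθab le_sup_left) _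

lemma sup_theta_inf_eq_or_eq (hInf : ∀ S ⊆ C, sInf S ∈ C) (hSup : ∀ S ⊆ C, sSup S ∈ C)
    (hγ : IsCMI C γ p) (a : A) :
    (γ ⊔ theta C one a) ⊓ p = γ ∨ γ ⊔ theta C one a = p ⊔ theta C one a := by
  refine or_iff_not_imp_left.mpr fun hne => le_antisymm (sup_le_sup_right hγ.le_cover _) ?_
  have hmem : (γ ⊔ theta C one a) ⊓ p ∈ C :=
    inf_mem_of_sInf_mem hInf (sup_mem_of_sSup_mem hSup hγ.mem (theta_mem hInf one a)) hγ.cover_mem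
  have hp : p ≤ (γ ⊔ theta C one a) ⊓ p :=
    hγ.cover_le hmem ((le_inf le_sup_left hγ.le_cover).lt_of_ne (Ne.symm hne))
  exact sup_le (hp.trans inf_le_left) le_sup_right

lemma rel_of_sup_theta_inf_eq (hInf : ∀ S ⊆ C, sInf S ∈ C) (hSup : ∀ S ⊆ C, sSup S ∈ C)
    (hO : JoinThetaInjective one C) (hγ : IsCMI C γ p) {x y z : A}
    (hx : (γ ⊔ theta C one x) ⊓ p = γ) (hxy : p.r x y) (hxz : p.r x z)
    (hnxy : ¬ γ.r x y) (hnxz : ¬ γ.r x z) : γ.r y z := by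
  have hδ : γ ⊔ theta C one x ∈ C := sup_mem_of_sSup_mem hSup hγ.mem (theta_mem hInf one x)
  have hyz : (γ ⊔ theta C one x).r y z := (hO _ hδ y z).mp <|
    (hγ.sup_theta_sup_theta_eq hInf hSup hxy hnxy).trans
      (hγ.sup_theta_sup_theta_eq hInf hSup hxz hnxz).symm
  exact hx ▸ ⟨hyz, p.trans' (p.symm' hxy) hxz⟩

/-- A completely meet irreducible `γ` has index at most two in its cover. -/
lemma rel_of_not_rel_of_not_rel (hInf : ∀ S ⊆ C, sInf S ∈ C) (hSup : ∀ S ⊆ C, sSup S ∈ C)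
    (hO : JoinThetaInjective one C) (hγ : IsCMI C γ p) {s t r : A}
    (hst : p.r s t) (htr : p.r t r) (hnst : ¬ γ.r s t) (hntr : ¬ γ.r t r) : γ.r s r := by
  by_contra hnsr
  rcases hγ.sup_theta_inf_eq_or_eq (one := one) hInf hSup s with hs | hs
  · exact hntr (hγ.rel_of_sup_theta_inf_eq hInf hSup hO hs hst (p.trans' hst htr) hnst hnsr)
  rcases hγ.sup_theta_inf_eq_or_eq (one := one) hInf hSup t with ht | ht
  · exact hnsr (hγ.rel_of_sup_theta_inf_eq hInf hSup hO ht (p.symm' hst) htr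
      (fun h => hnst (γ.symm' h)) hntr)
  refine hnst ((hO γ hγ.mem s t).mp ?_)
  rw [hs, ht]
  exact (hO p hγ.cover_mem s t).mpr hst

lemma hasParityOn (hInf : ∀ S ⊆ C, sInf S ∈ C) (hSup : ∀ S ⊆ C, sSup S ∈ C)
    (hO : JoinThetaInjective one C) (hγ : IsCMI C γ p) : HasParityOn p γ := by
  intro u v w huv hvw
  by_cases h₁ : γ.r u v <;> by_cases h₂ : γ.r v w
  · exact iff_of_true (γ.trans' h₁ h₂) (iff_of_true h₁ h₂)
  · exact iff_of_false (fun h => h₂ (γ.trans' (γ.symm' h₁) h)) fun h => h₂ (h.mp h₁)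
  · exact iff_of_false (fun h => h₁ (γ.trans' h (γ.symm' h₂))) fun h => h₁ (h.mpr h₂)
  · exact iff_of_true (hγ.rel_of_not_rel_of_not_rel hInf hSup hO huv hvw h₁ h₂)
      (iff_of_false h₁ h₂)

end IsCMI

lemma HasParityOn.equivalence_xor {p x y z : Setoid A} (hx : HasParityOn p x)
    (hy : HasParityOn p y) (hz : HasParityOn p z) :
    Equivalence fun u v => p.r u v ∧ (x.r u v ↔ (y.r u v ↔ z.r u v)) where
  refl u := ⟨p.refl' u, iff_of_true (x.refl' u) (iff_of_true (y.refl' u) (z.refl' u))⟩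
  symm := by
    rintro u v ⟨huv, h⟩
    refine ⟨p.symm' huv, ?_⟩
    rwa [x.comm', y.comm', z.comm']
  trans := by
    rintro u v w ⟨huv, h₁⟩ ⟨hvw, h₂⟩
    refine ⟨p.trans' huv hvw, ?_⟩
    rw [hx huv hvw, hy huv hvw, hz huv hvw]
    tauto

lemma xor_of_inf_le {x y z : Setoid A} (hxy : x ⊓ y ≤ z) (hyz : y ⊓ z ≤ x) (hzx : z ⊓ x ≤ y)
    {u v : A} (h : x.r u v ∨ y.r u v ∨ z.r u v) : x.r u v ↔ (y.r u v ↔ z.r u v) := by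
  have := fun hx hy => hxy (x := u) (y := v) ⟨hx, hy⟩
  have := fun hy hz => hyz (x := u) (y := v) ⟨hy, hz⟩
  have := fun hz hx => hzx (x := u) (y := v) ⟨hz, hx⟩
  tauto

lemma IsCMI.inf_le_of_inf_le {C : Set (Setoid A)} (hInf : ∀ S ⊆ C, sInf S ∈ C)
    (hSup : ∀ S ⊆ C, sSup S ∈ C) (hM : IsModularOn C) {φ ψ η p : Setoid A}
    (hφ : IsCMI C φ p) (hψ : IsCMI C ψ p) (hη : IsCMI C η p) (hφψ : φ ⊓ ψ ≤ η) (hne : η ≠ φ) :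
    η ⊓ φ ≤ ψ := by
  by_contra hnle
  have hmem : η ⊓ φ ∈ C := inf_mem_of_sInf_mem hInf hη.mem hφ.mem
  have hsup : η ⊓ φ ⊔ ψ = p := by
    refine le_antisymm (sup_le (inf_le_left.trans hη.le_cover) hψ.le_cover) ?_
    exact hψ.cover_le (sup_mem_of_sSup_mem hSup hmem hψ.mem) (right_lt_sup.mpr hnle)
  have hφη : φ ≤ η := by
    calc φ = (η ⊓ φ ⊔ ψ) ⊓ φ := by rw [hsup, inf_eq_right.mpr hφ.le_cover]
      _ = η ⊓ φ ⊔ ψ ⊓ φ := (hM _ hmem ψ hψ.mem φ hφ.mem inf_le_right).symm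
      _ ≤ η := sup_le inf_le_left (inf_comm ψ φ ▸ hφψ)
  exact hne (hφ.eq_of_le_of_lt_cover hη.mem hφη hη.lt_cover).symm

lemma IsCMI.rel_eq_bul {one : A} {C : Set (Setoid A)} (hInf : ∀ S ⊆ C, sInf S ∈ C)
    (hSup : ∀ S ⊆ C, sSup S ∈ C) (hM : IsModularOn C) (hO : JoinThetaInjective one C)
    {φ ψ η p : Setoid A} (hφ : IsCMI C φ p) (hψ : IsCMI C ψ p) (hη : IsCMI C η p)
    (hφψ : φ ⊓ ψ ≤ η) (hneφ : η ≠ φ) (hneψ : η ≠ ψ) : η.r = Bul p φ ψ := by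
  have hηφ : η ⊓ φ ≤ ψ := hφ.inf_le_of_inf_le hInf hSup hM hψ hη hφψ hneφ
  have hηψ : ψ ⊓ η ≤ φ := inf_comm η ψ ▸
    hψ.inf_le_of_inf_le hInf hSup hM hφ hη (inf_comm φ ψ ▸ hφψ) hneψ
  let R : Setoid A := ⟨_, HasParityOn.equivalence_xor (hη.hasParityOn hInf hSup hO)
    (hφ.hasParityOn hInf hSup hO) (hψ.hasParityOn hInf hSup hO)⟩
  have hxor {u v : A} (h : η.r u v ∨ φ.r u v) : R.r u v :=
    ⟨h.elim (fun h => hη.le_cover h) (fun h => hφ.le_cover h),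
      xor_of_inf_le hηφ hφψ hηψ (h.elim .inl fun h => .inr (.inl h))⟩
  -- `φ ⊔ η = p` because `η ≰ φ`, and both lie below the equivalence `R`
  have hpR : p ≤ R := by
    refine (hφ.cover_le (sup_mem_of_sSup_mem hSup hφ.mem hη.mem) ?_).trans
      (sup_le (fun u v h => hxor (.inr h)) fun u v h => hxor (.inl h))
    exact left_lt_sup.mpr fun h => hneφ (hη.eq_of_le_of_lt_cover hφ.mem h hφ.lt_cover)
  ext u v
  exact ⟨fun h => ⟨hη.le_cover h, (hxor (.inl h)).2.mp h⟩,
    fun ⟨hp, h⟩ => (hpR hp).2.mpr h⟩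

lemma iInf_fin_succ {α : Type*} [CompleteLattice α] {n : ℕ} (f : Fin (n + 1) → α) :
    ⨅ i, f i = f 0 ⊓ ⨅ i : Fin n, f i.succ :=
  le_antisymm (le_inf (iInf_le f 0) (le_iInf fun i => iInf_le f i.succ))
    (le_iInf <| Fin.cases inf_le_left fun i => inf_le_right.trans (iInf_le _ i))

lemma List.IsChain.map_fin_succ {n : ℕ} {l : List (Fin n)} (hl : l.IsChain (· < ·)) :
    (l.map Fin.succ).IsChain (· < ·) :=
  List.isChain_map _ |>.mpr <| hl.imp fun _ _ => Fin.succ_lt_succ_iff.mpr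

lemma map_fin_succ_map_fin_cons {n : ℕ} (c : Setoid A) (μ : Fin n → Setoid A)
    (l : List (Fin n)) :
    (l.map Fin.succ).map (fun i => ((Fin.cons c μ : Fin (n + 1) → Setoid A) i).r) =
      l.map fun i => (μ i).r := by
  rw [List.map_map]
  rfl

def IsBulDecomposition (C : Set (Setoid A)) (p η : Setoid A) {n : ℕ} (α μ : Fin n → Setoid A) :
    Prop :=
  (∀ i, μ i = ⊤ ∨ PIP C (μ i) η) ∧ (∀ i, α i ≤ μ i) ∧ ⨅ i, μ i ≤ η ∧
    ∃ l : List (Fin n), l.IsChain (· < ·) ∧ (∀ i ∈ l, μ i ≠ ⊤) ∧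
      η.r = BulList p.r (l.map fun i => (μ i).r)

namespace IsBulDecomposition

variable {C : Set (Setoid A)} {p η : Setoid A} {n : ℕ} {α : Fin (n + 1) → Setoid A}
  {μ : Fin n → Setoid A} {c : Setoid A}

lemma cons (hc : c = ⊤ ∨ PIP C c η) (hα : α 0 ≤ c)
    (h : IsBulDecomposition C p η (Fin.tail α) μ) :
    IsBulDecomposition C p η α (Fin.cons c μ) := by
  obtain ⟨hμ, hαμ, hinf, l, hl, hltop, hηl⟩ := h
  refine ⟨Fin.cases hc hμ, Fin.cases hα hαμ, ?_, l.map Fin.succ, hl.map_fin_succ, ?_, ?_⟩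
  · rw [iInf_fin_succ]
    exact inf_le_right.trans (by simpa only [Fin.cons_succ] using hinf)
  · simpa only [List.mem_map, forall_exists_index, and_imp, forall_apply_eq_imp_iff₂,
      Fin.cons_succ] using hltop
  · rw [map_fin_succ_map_fin_cons, hηl]

lemma cons_bul {ν : Setoid A} (hc : PIP C c η) (hν : PIP C ν η)
    (hα : α 0 ≤ c) (hcν : c ⊓ ν ≤ η) (hη : η.r = Bul p c ν)
    (h : IsBulDecomposition C p ν (Fin.tail α) μ) :
    IsBulDecomposition C p η α (Fin.cons c μ) := by
  obtain ⟨hμ, hαμ, hinf, l, hl, hltop, hνl⟩ := h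
  refine ⟨Fin.cases (.inr hc) fun i => (hμ i).imp_right (·.trans hν), Fin.cases hα hαμ, ?_,
    0 :: l.map Fin.succ, ?_, ?_, ?_⟩
  · rw [iInf_fin_succ]
    exact (inf_le_inf_left _ (by simpa only [Fin.cons_succ] using hinf)).trans hcν
  · exact List.isChain_cons.mpr ⟨by simp [Fin.succ_pos], hl.map_fin_succ⟩
  · simpa only [List.mem_cons, List.mem_map, forall_eq_or_imp, forall_exists_index, and_imp,
      forall_apply_eq_imp_iff₂, Fin.cons_zero, Fin.cons_succ] using ⟨hc.ne_top, hltop⟩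
  · rw [List.map_cons, map_fin_succ_map_fin_cons, BulList, ← hνl, hη]
    rfl

end IsBulDecomposition

lemma IsCMI.isBulDecomposition_cons_top {C : Set (Setoid A)} {p η : Setoid A} {n : ℕ}
    {α : Fin (n + 1) → Setoid A} (hη : IsCMI C η p) (hα : α 0 ≤ η) :
    IsBulDecomposition C p η α (Fin.cons η fun _ => ⊤) := by
  refine ⟨Fin.cases (.inr (.refl hη)) fun _ => .inl rfl, Fin.cases hα fun _ => le_top,
    iInf_le_of_le 0 le_rfl, [0], List.isChain_singleton 0, by simpa using hη.ne_top, ?_⟩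
  ext u v
  exact ⟨fun h => ⟨hη.le_cover h, iff_of_true h (hη.le_cover h)⟩, fun h => h.2.mpr h.1⟩

theorem exists_isBulDecomposition {one : A} {C : Set (Setoid A)} (hInf : ∀ S ⊆ C, sInf S ∈ C)
    (hSup : ∀ S ⊆ C, sSup S ∈ C) (hM : IsModularOn C) (hO : JoinThetaInjective one C)
    (hP : PIPSameCover C) (hD : PIPDecomposable C) {p : Setoid A} {n : ℕ} :
    ∀ {η : Setoid A} (α : Fin n → Setoid A), IsCMI C η p → (∀ i, α i ∈ C) → ⨅ i, α i ≤ η →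
      ∃ μ, IsBulDecomposition C p η α μ := by
  induction n with
  | zero =>
    intro η α hη _ hle
    exact absurd (top_le_iff.mp (iInf_of_empty α ▸ hle)) hη.ne_top
  | succ n ih =>
    intro η α hη hαC hle
    obtain ⟨μ₀, ν, hμ₀, hν, hαμ₀, hαν, hμ₀ν⟩ := hD (α 0) (hαC 0) _
      (iInf_mem_of_sInf_mem hInf fun i : Fin n => hαC i.succ) η p hη (iInf_fin_succ α ▸ hle)
    by_cases hνη : ν = η
    · obtain ⟨μ, hμ⟩ := ih (Fin.tail α) hη (fun i => hαC i.succ) (hνη ▸ hαν)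
      exact ⟨_, hμ.cons hμ₀ hαμ₀⟩
    by_cases hμ₀η : μ₀ = η
    · exact ⟨_, hη.isBulDecomposition_cons_top (hμ₀η ▸ hαμ₀)⟩
    have hμ₀ : PIP C μ₀ η := hμ₀.resolve_left fun h =>
      hνη (eq_of_le_of_eq_top_or_pip hP hη hν (by rwa [h, top_inf_eq] at hμ₀ν))
    have hν : PIP C ν η := hν.resolve_left fun h =>
      hμ₀η (eq_of_le_of_eq_top_or_pip hP hη (.inr hμ₀) (by rwa [h, inf_top_eq] at hμ₀ν))
    have hμ₀C := hμ₀.isCMI hP hη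
    have hνC := hν.isCMI hP hη
    obtain ⟨μ, hμ⟩ := ih (Fin.tail α) hνC (fun i => hαC i.succ) hαν
    exact ⟨_, hμ.cons_bul hμ₀ hν hαμ₀ hμ₀ν
      (hμ₀C.rel_eq_bul hInf hSup hM hO hνC hη hμ₀ν (Ne.symm hμ₀η) (Ne.symm hνη))⟩

theorem stmt12_general (one : A) (C : Set (Setoid A))
    (hInf : ∀ S ⊆ C, sInf S ∈ C) (hSup : ∀ S ⊆ C, sSup S ∈ C)
    (hM : ∀ x ∈ C, ∀ y ∈ C, ∀ z ∈ C, x ≤ z → x ⊔ y ⊓ z = (x ⊔ y) ⊓ z)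
    (hO : ∀ α ∈ C, ∀ a b : A, α ⊔ theta C one a = α ⊔ theta C one b ↔ α.r a b)
    (hP : ∀ φ ψ p q : Setoid A, IsCMI C φ p → IsCMI C ψ q →
      Projective C (φ, p) (ψ, q) → p = q)
    (hD : ∀ α ∈ C, ∀ β ∈ C, ∀ η p, IsCMI C η p → α ⊓ β ≤ η →
      ∃ μ₁ μ₂ : Setoid A, (μ₁ = ⊤ ∨ PIP C μ₁ η) ∧ (μ₂ = ⊤ ∨ PIP C μ₂ η) ∧
        α ≤ μ₁ ∧ β ≤ μ₂ ∧ μ₁ ⊓ μ₂ ≤ η)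
    (η p : Setoid A) (hη : IsCMI C η p) {n : ℕ} (α : Fin n → Setoid A)
    (hαC : ∀ i, α i ∈ C) (hle : (⨅ i, α i) ≤ η) :
    ∃ μ : Fin n → Setoid A,
      (∀ i, μ i = ⊤ ∨ PIP C (μ i) η) ∧ (∀ i, α i ≤ μ i) ∧ (⨅ i, μ i) ≤ η ∧
      ∃ l : List (Fin n), l.Chain' (· < ·) ∧ (∀ i ∈ l, μ i ≠ ⊤) ∧
        η.r = BulList p.r (l.map fun i => (μ i).r) :=
  exists_isBulDecomposition hInf hSup hM hO hP hD α hη hαC hle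

/-- Proposition 15 (Section 3): if `α₁ ⊓ ⋯ ⊓ αₙ ≤ η` with `η ∈ Cm`, then there are
`μ₁, …, μₙ ∈ U ∪ {⊤}` (where `U = η/∼`) with `αᵢ ≤ μᵢ`, `μ₁ ⊓ ⋯ ⊓ μₙ ≤ η`, and `η`
is the `•`-product of some strictly increasing subfamily of the `μᵢ` different
from `⊤`, i.e. `η` lies in the subgroup of `(Ū, •)` generated by
`{μ₁, …, μₙ} \ {⊤}`. -/
theorem stmt12 (one : A) (C : Set (Setoid A))
    (hInf : ∀ S ⊆ C, sInf S ∈ C) (hSup : ∀ S ⊆ C, sSup S ∈ C)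
    (hDir : ∀ D ⊆ C, D.Nonempty → DirectedOn (· ≤ ·) D →
      ∀ x y : A, (sSup D).r x y ↔ ∃ s ∈ D, s.r x y)
    (hM : ∀ x ∈ C, ∀ y ∈ C, ∀ z ∈ C, x ≤ z → x ⊔ y ⊓ z = (x ⊔ y) ⊓ z)
    (hO : ∀ α ∈ C, ∀ a b : A, α ⊔ theta C one a = α ⊔ theta C one b ↔ α.r a b)
    (hR : ∀ α ∈ C, ∀ β ∈ C, (∀ x : A, α.r one x ↔ β.r one x) → α = β)
    (hP : ∀ φ ψ p q : Setoid A, IsCMI C φ p → IsCMI C ψ q →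
      Projective C (φ, p) (ψ, q) → p = q)
    (hD : ∀ α ∈ C, ∀ β ∈ C, ∀ η p, IsCMI C η p → α ⊓ β ≤ η →
      ∃ μ₁ μ₂ : Setoid A, (μ₁ = ⊤ ∨ PIP C μ₁ η) ∧ (μ₂ = ⊤ ∨ PIP C μ₂ η) ∧
        α ≤ μ₁ ∧ β ≤ μ₂ ∧ μ₁ ⊓ μ₂ ≤ η)
    (η p : Setoid A) (hη : IsCMI C η p) {n : ℕ} (α : Fin n → Setoid A)
    (hαC : ∀ i, α i ∈ C) (hle : (⨅ i, α i) ≤ η) :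
    ∃ μ : Fin n → Setoid A,
      (∀ i, μ i = ⊤ ∨ PIP C (μ i) η) ∧ (∀ i, α i ≤ μ i) ∧ (⨅ i, μ i) ≤ η ∧
      ∃ l : List (Fin n), l.Chain' (· < ·) ∧ (∀ i ∈ l, μ i ≠ ⊤) ∧
        η.r = BulList p.r (l.map fun i => (μ i).r) :=
  stmt12_general one C hInf hSup hM hO hP hD η p hη α hαC hle
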